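/- arXiv:1005.5185 — 3 statements merged into one kernel-verified Lean document; each statement's English description precedes it below -/
import Mathlib

section
/- The set of images under the quotient map π_B of the pure tensors that contain no factor from R' (i.e., π_B(⟨X⟩ ∖ ⟨R'⟩)) is a K-vector-space basis of the algebra B. -/
noncomputable section

inductive Gen (n : ℕ) : Type
  | a : Fin (n+1) → Gen n
  | b : Fin (n+1) → Gen n
  | c : Fin (n+1) → Gen n

variable (K : Type) [Field K] (n : ℕ)

/-- The tensor algebra `T(V)` on the span of the generators, i.e. the free algebra. -/
abbrev FA := FreeAlgebra K (Gen n)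

/-- `a_i`, with the convention that out-of-range indices give `0`. -/
def ga (i : ℤ) : FA K n :=
  if h : 0 ≤ i ∧ i ≤ (n : ℤ) then FreeAlgebra.ι K (Gen.a ⟨i.toNat, by omega⟩) else 0

def gb (i : ℤ) : FA K n :=
  if h : 0 ≤ i ∧ i ≤ (n : ℤ) then FreeAlgebra.ι K (Gen.b ⟨i.toNat, by omega⟩) else 0

def gc (i : ℤ) : FA K n :=
  if h : 0 ≤ i ∧ i ≤ (n : ℤ) then FreeAlgebra.ι K (Gen.c ⟨i.toNat, by omega⟩) else 0

/-- The set `R` of defining relations. -/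
def rels : Set (FA K n) :=
  { x | x = ga K n n * gb K n n * gc K n n ∨ x = gc K n 0 * ga K n 0 ∨
      ∃ i : ℕ, i < n ∧
        (x = ga K n i * gb K n i * gc K n i + gc K n (i+1) * ga K n (i+1) * gb K n (i+1) ∨
         x = gb K n (i+1) * gc K n (i+1) * ga K n (i+1) ∨
         x = gc K n i * gc K n (i+1) ∨
         x = gb K n (i+1) * ga K n i) }

/-- The relation whose ring-quotient is `B = T(V)/⟨R⟩`. -/
def BRel (x y : FA K n) : Prop := x ∈ rels K n ∧ y = 0

/-- The algebra `B = T(V)/⟨R⟩`. -/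
abbrev B := RingQuot (BRel K n)

/-- The quotient map `π_B : T(V) → B`. -/
def πB : FA K n →ₐ[K] B K n := RingQuot.mkAlgHom K (BRel K n)

/-- The image of `a_i` in `B` (zero for out-of-range indices). -/
def aB (i : ℤ) : B K n := πB K n (ga K n i)
def bB (i : ℤ) : B K n := πB K n (gb K n i)
def cB (i : ℤ) : B K n := πB K n (gc K n i)

/-- The left annihilator of `x`, as a left ideal of `B`. -/
def lann (x : B K n) : Ideal (B K n) where
  carrier := {w | w * x = 0}
  add_mem' := by
    intro a b ha hb
    simp only [Set.mem_setOf_eq, add_mul] at *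
    rw [ha, hb, add_zero]
  zero_mem' := by simp
  smul_mem' := by
    intro c w hw
    simp only [Set.mem_setOf_eq, smul_eq_mul, mul_assoc] at *
    rw [hw, mul_zero]

end

/-- The pure tensor in `T(V)` corresponding to a word in the generators. -/
def word (K : Type) [Field K] (n : ℕ) (l : List (Gen n)) : FA K n :=
  (l.map (FreeAlgebra.ι K)).prod

/-- The set `R'` of forbidden subwords, as words in the generators. -/
def Rwords' (n : ℕ) : Set (List (Gen n)) :=
  { l | l = [Gen.a (Fin.last n), Gen.b (Fin.last n), Gen.c (Fin.last n)] ∨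
        l = [Gen.c 0, Gen.a 0] ∨
        ∃ i : Fin n,
          l = [Gen.c i.succ, Gen.a i.succ, Gen.b i.succ] ∨
          l = [Gen.b i.succ, Gen.c i.succ, Gen.a i.succ] ∨
          l = [Gen.c i.castSucc, Gen.c i.succ] ∨
          l = [Gen.b i.succ, Gen.a i.castSucc] }

/-!
The words avoiding `R'` are the normal forms of the rewriting system sending
`c_{i+1} a_{i+1} b_{i+1}` to `-a_i b_i c_i` and every other word of `R'` to `0`. Rewriting lowers
the sum of the indices, so normal words span `B`. For independence, let each generator act on the
free vector space on normal words by prepending and rewriting at the front. The defining relations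
hold for this action (the overlap ambiguities resolve), so `B` acts, and applying the image of a
normal word to the empty word gives the corresponding basis vector.
-/

open FreeAlgebra

section Relations

variable {K : Type} [Field K] {n : ℕ}

structure SatisfiesRels {A : Type*} [Semiring A] (x : Gen n → A) : Prop where
  abc_last : x (.a (Fin.last n)) * x (.b (Fin.last n)) * x (.c (Fin.last n)) = 0
  ca_zero : x (.c 0) * x (.a 0) = 0
  abc_add_cab (i : Fin n) :
    x (.a i.castSucc) * x (.b i.castSucc) * x (.c i.castSucc) +
      x (.c i.succ) * x (.a i.succ) * x (.b i.succ) = 0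
  bca (i : Fin n) : x (.b i.succ) * x (.c i.succ) * x (.a i.succ) = 0
  cc (i : Fin n) : x (.c i.castSucc) * x (.c i.succ) = 0
  ba (i : Fin n) : x (.b i.succ) * x (.a i.castSucc) = 0

lemma ga_coe (j : Fin (n + 1)) : ga K n (j : ℕ) = ι K (.a j) := by
  simp [ga, j.is_le]

lemma gb_coe (j : Fin (n + 1)) : gb K n (j : ℕ) = ι K (.b j) := by
  simp [gb, j.is_le]

lemma gc_coe (j : Fin (n + 1)) : gc K n (j : ℕ) = ι K (.c j) := by
  simp [gc, j.is_le]

lemma mem_rels_iff {r : FA K n} :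
    r ∈ rels K n ↔
      r = ι K (.a (Fin.last n)) * ι K (.b (Fin.last n)) * ι K (.c (Fin.last n)) ∨
      r = ι K (.c 0) * ι K (.a 0) ∨
      ∃ i : Fin n,
        r = ι K (.a i.castSucc) * ι K (.b i.castSucc) * ι K (.c i.castSucc) +
          ι K (.c i.succ) * ι K (.a i.succ) * ι K (.b i.succ) ∨
        r = ι K (.b i.succ) * ι K (.c i.succ) * ι K (.a i.succ) ∨
        r = ι K (.c i.castSucc) * ι K (.c i.succ) ∨
        r = ι K (.b i.succ) * ι K (.a i.castSucc) := by
  have last : ((n : ℕ) : ℤ) = ((Fin.last n : ℕ) : ℤ) := rfl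
  have zero : (0 : ℤ) = (((0 : Fin (n + 1)) : ℕ) : ℤ) := rfl
  have succ (i : Fin n) : ((i : ℕ) : ℤ) + 1 = ((i.succ : ℕ) : ℤ) := by simp
  have castSucc (i : Fin n) : ((i : ℕ) : ℤ) = ((i.castSucc : ℕ) : ℤ) := rfl
  simp only [rels, Set.mem_ofPred_eq, last, zero, ga_coe, gb_coe, gc_coe]
  refine or_congr_right (or_congr_right ⟨?_, ?_⟩)
  · rintro ⟨i, hi, h⟩
    obtain ⟨i, rfl⟩ : ∃ i' : Fin n, (i' : ℕ) = i := ⟨⟨i, hi⟩, rfl⟩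
    rw [succ, castSucc] at h
    exact ⟨i, by simpa only [ga_coe, gb_coe, gc_coe] using h⟩
  · rintro ⟨i, h⟩
    refine ⟨i, i.isLt, ?_⟩
    rw [succ, castSucc]
    simpa only [ga_coe, gb_coe, gc_coe] using h

lemma satisfiesRels_iff {A : Type*} [Semiring A] [Algebra K A] (ρ : FA K n →ₐ[K] A) :
    SatisfiesRels (fun g => ρ (ι K g)) ↔ ∀ r ∈ rels K n, ρ r = 0 := by
  constructor
  · rintro ⟨h₁, h₂, h₃, h₄, h₅, h₆⟩ r hr
    rcases mem_rels_iff.1 hr with rfl | rfl | ⟨i, rfl | rfl | rfl | rfl⟩ <;> simp [*]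
  · intro h
    exact ⟨by simpa using h _ (mem_rels_iff.2 (.inl rfl)),
      by simpa using h _ (mem_rels_iff.2 (.inr (.inl rfl))),
      fun i => by simpa using h _ (mem_rels_iff.2 (.inr (.inr ⟨i, .inl rfl⟩))),
      fun i => by simpa using h _ (mem_rels_iff.2 (.inr (.inr ⟨i, .inr (.inl rfl)⟩))),
      fun i => by simpa using h _ (mem_rels_iff.2 (.inr (.inr ⟨i, .inr (.inr (.inl rfl))⟩))),
      fun i => by simpa using h _ (mem_rels_iff.2 (.inr (.inr ⟨i, .inr (.inr (.inr rfl))⟩)))⟩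

end Relations

section Reduction

variable {n : ℕ}

def IsReducible (l : List (Gen n)) : Prop := ∃ w ∈ Rwords' n, w <:+: l

abbrev NormalWord (n : ℕ) := {l : List (Gen n) // ¬ IsReducible l}

def HasCabPrefix (l : List (Gen n)) : Prop :=
  ∃ (i : Fin n) (t : List (Gen n)), l = .c i.succ :: .a i.succ :: .b i.succ :: t

lemma IsReducible.cons (x : Gen n) {l : List (Gen n)} (h : IsReducible l) :
    IsReducible (x :: l) :=
  let ⟨w, hw, hwl⟩ := h
  ⟨w, hw, hwl.trans (List.suffix_cons x l).isInfix⟩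

lemma isReducible_cons_iff {x : Gen n} {l : List (Gen n)} :
    IsReducible (x :: l) ↔ (∃ w ∈ Rwords' n, w <+: x :: l) ∨ IsReducible l := by
  simp only [IsReducible, List.infix_cons_iff, ← exists_or, ← and_or_left]

lemma isReducible_abc_last (l : List (Gen n)) :
    IsReducible (.a (Fin.last n) :: .b (Fin.last n) :: .c (Fin.last n) :: l) :=
  ⟨[.a (Fin.last n), .b (Fin.last n), .c (Fin.last n)], by simp [Rwords'], [], l, rfl⟩

lemma isReducible_ca_zero (l : List (Gen n)) : IsReducible (.c 0 :: .a 0 :: l) :=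
  ⟨[.c 0, .a 0], by simp [Rwords'], [], l, rfl⟩

lemma isReducible_cab (i : Fin n) (l : List (Gen n)) :
    IsReducible (.c i.succ :: .a i.succ :: .b i.succ :: l) :=
  ⟨[.c i.succ, .a i.succ, .b i.succ], by simp [Rwords'], [], l, rfl⟩

lemma isReducible_bca (i : Fin n) (l : List (Gen n)) :
    IsReducible (.b i.succ :: .c i.succ :: .a i.succ :: l) :=
  ⟨[.b i.succ, .c i.succ, .a i.succ], by simp [Rwords'], [], l, rfl⟩

lemma isReducible_cc (i : Fin n) (l : List (Gen n)) :
    IsReducible (.c i.castSucc :: .c i.succ :: l) :=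
  ⟨[.c i.castSucc, .c i.succ], by simp [Rwords'], [], l, rfl⟩

lemma isReducible_ba (i : Fin n) (l : List (Gen n)) :
    IsReducible (.b i.succ :: .a i.castSucc :: l) :=
  ⟨[.b i.succ, .a i.castSucc], by simp [Rwords'], [], l, rfl⟩

/-- The overlaps of `c_{i+1} a_{i+1} b_{i+1}` with `a_n b_n c_n`, `b_{i+1} c_{i+1} a_{i+1}` and
`b_{i+1} a_i` are resolvable. -/
lemma isReducible_abc_of_isReducible_ab {i : Fin n} {t : List (Gen n)}
    (h : IsReducible (.a i.succ :: .b i.succ :: t)) :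
    IsReducible (.a i.castSucc :: .b i.castSucc :: .c i.castSucc :: t) := by
  have cc_infix (t' : List (Gen n)) :
      IsReducible (.a i.castSucc :: .b i.castSucc :: .c i.castSucc :: .c i.succ :: t') :=
    ((isReducible_cc i t').cons _).cons _
  rcases isReducible_cons_iff.1 h with ⟨w, hw, hpre⟩ | h
  · rcases hw with rfl | rfl | ⟨i, rfl | rfl | rfl | rfl⟩ <;> simp at hpre
    obtain ⟨hlast, t', rfl⟩ := hpre
    simpa [hlast] using cc_infix t'
  rcases isReducible_cons_iff.1 h with ⟨w, hw, hpre⟩ | h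
  · rcases hw with rfl | rfl | ⟨i, rfl | rfl | rfl | rfl⟩ <;> simp at hpre
    · obtain ⟨rfl, t', rfl⟩ := hpre
      exact cc_infix _
    · obtain ⟨rfl, t', rfl⟩ := hpre
      rcases Fin.eq_zero_or_eq_succ i.castSucc with h0 | ⟨k, hk⟩
      · rw [h0]
        exact ((isReducible_ca_zero _).cons _).cons _
      · rw [hk]
        exact (isReducible_bca k _).cons _
  exact ((h.cons _).cons _).cons _

end Reduction

section Action

variable (K : Type) [Field K] {n : ℕ}

open Classical in
noncomputable def ofWord (l : List (Gen n)) : NormalWord n →₀ K :=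
  if h : IsReducible l then 0 else Finsupp.single ⟨l, h⟩ 1

lemma ofWord_of_isReducible {l : List (Gen n)} (h : IsReducible l) : ofWord K l = 0 :=
  dif_pos h

lemma ofWord_coe (l : NormalWord n) : ofWord K l.1 = Finsupp.single l 1 :=
  dif_neg l.2

lemma ext_ofWord {E E' : Module.End K (NormalWord n →₀ K)}
    (h : ∀ l : NormalWord n, E (ofWord K l.1) = E' (ofWord K l.1)) : E = E' :=
  Finsupp.basisSingleOne.ext fun l => by simpa [ofWord_coe] using h l

/-- Left multiplication of a normal word by a generator, rewriting `c_{i+1} a_{i+1} b_{i+1}` to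
`-a_i b_i c_i` and every other reducible word to `0`. -/
noncomputable def mulGen : Gen n → List (Gen n) → NormalWord n →₀ K
  | .c j, .a j₁ :: .b j₂ :: t =>
    if h : j₁ = j ∧ j₂ = j ∧ j ≠ 0 then
      -ofWord K (.a (j.pred h.2.2).castSucc :: .b (j.pred h.2.2).castSucc ::
        .c (j.pred h.2.2).castSucc :: t)
    else ofWord K (.c j :: .a j₁ :: .b j₂ :: t)
  | g, l => ofWord K (g :: l)

lemma mulGen_eq_ofWord {g : Gen n} {l : List (Gen n)} (h : ¬ HasCabPrefix (g :: l)) :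
    mulGen K g l = ofWord K (g :: l) := by
  unfold mulGen
  split
  · rw [dif_neg]
    rintro ⟨rfl, rfl, hj⟩
    exact h ⟨Fin.pred _ hj, _, by rw [Fin.succ_pred]⟩
  · rfl

noncomputable def mulGenₗ (g : Gen n) : Module.End K (NormalWord n →₀ K) :=
  Finsupp.linearCombination K fun l => mulGen K g l.1

lemma mulGenₗ_ofWord {g : Gen n} {l : List (Gen n)} (h : ¬ HasCabPrefix (g :: l)) :
    mulGenₗ K g (ofWord K l) = ofWord K (g :: l) := by
  by_cases hl : IsReducible l
  · rw [ofWord_of_isReducible K hl, ofWord_of_isReducible K (hl.cons g), map_zero]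
  rw [ofWord_coe K ⟨l, hl⟩, mulGenₗ, Finsupp.linearCombination_single, one_smul]
  exact mulGen_eq_ofWord K h

lemma mulGenₗ_ofWord_cab (i : Fin n) (t : List (Gen n)) :
    mulGenₗ K (.c i.succ) (ofWord K (.a i.succ :: .b i.succ :: t)) =
      -ofWord K (.a i.castSucc :: .b i.castSucc :: .c i.castSucc :: t) := by
  by_cases hl : IsReducible (.a i.succ :: .b i.succ :: t)
  · rw [ofWord_of_isReducible K hl,
      ofWord_of_isReducible K (isReducible_abc_of_isReducible_ab hl), map_zero, neg_zero]
  rw [ofWord_coe K ⟨_, hl⟩, mulGenₗ, Finsupp.linearCombination_single, one_smul]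
  simp [mulGen]

@[simp] lemma mulGenₗ_a_ofWord (j : Fin (n + 1)) (l : List (Gen n)) :
    mulGenₗ K (.a j) (ofWord K l) = ofWord K (.a j :: l) :=
  mulGenₗ_ofWord K (by simp [HasCabPrefix])

@[simp] lemma mulGenₗ_b_ofWord (j : Fin (n + 1)) (l : List (Gen n)) :
    mulGenₗ K (.b j) (ofWord K l) = ofWord K (.b j :: l) :=
  mulGenₗ_ofWord K (by simp [HasCabPrefix])

@[simp] lemma mulGenₗ_c_zero_ofWord (l : List (Gen n)) :
    mulGenₗ K (.c 0) (ofWord K l) = ofWord K (.c 0 :: l) :=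
  mulGenₗ_ofWord K (by simp [HasCabPrefix, eq_comm (a := (0 : Fin (n + 1)))])

lemma mulGenₗ_abc_last :
    mulGenₗ K (.a (Fin.last n)) * mulGenₗ K (.b (Fin.last n)) * mulGenₗ K (.c (Fin.last n)) =
      0 := by
  refine ext_ofWord K fun ⟨l, _⟩ => ?_
  simp only [Module.End.mul_apply, LinearMap.zero_apply]
  by_cases hcab : HasCabPrefix (.c (Fin.last n) :: l)
  · obtain ⟨i, t, h⟩ := hcab
    simp only [List.cons.injEq, Gen.c.injEq] at h
    obtain ⟨hi, rfl⟩ := h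
    rw [hi, mulGenₗ_ofWord_cab, map_neg, mulGenₗ_b_ofWord,
      ofWord_of_isReducible K (isReducible_ba i _), neg_zero, map_zero]
  · rw [mulGenₗ_ofWord K hcab, mulGenₗ_b_ofWord, mulGenₗ_a_ofWord,
      ofWord_of_isReducible K (isReducible_abc_last _)]

lemma mulGenₗ_abc_add_cab (i : Fin n) :
    mulGenₗ K (.a i.castSucc) * mulGenₗ K (.b i.castSucc) * mulGenₗ K (.c i.castSucc) +
      mulGenₗ K (.c i.succ) * mulGenₗ K (.a i.succ) * mulGenₗ K (.b i.succ) = 0 := by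
  refine ext_ofWord K fun ⟨l, _⟩ => ?_
  simp only [LinearMap.add_apply, Module.End.mul_apply, LinearMap.zero_apply, mulGenₗ_b_ofWord,
    mulGenₗ_a_ofWord, mulGenₗ_ofWord_cab]
  by_cases hcab : HasCabPrefix (.c i.castSucc :: l)
  · obtain ⟨k, t, h⟩ := hcab
    simp only [List.cons.injEq, Gen.c.injEq] at h
    obtain ⟨hk, rfl⟩ := h
    rw [hk, mulGenₗ_ofWord_cab, map_neg, mulGenₗ_b_ofWord,
      ofWord_of_isReducible K (isReducible_ba k _),
      ofWord_of_isReducible K (((isReducible_cab k t).cons _).cons _)]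
    simp
  · rw [mulGenₗ_ofWord K hcab, mulGenₗ_b_ofWord, mulGenₗ_a_ofWord, add_neg_cancel]

lemma mulGenₗ_bca (i : Fin n) :
    mulGenₗ K (.b i.succ) * mulGenₗ K (.c i.succ) * mulGenₗ K (.a i.succ) = 0 := by
  refine ext_ofWord K fun ⟨l, _⟩ => ?_
  simp only [Module.End.mul_apply, LinearMap.zero_apply, mulGenₗ_a_ofWord]
  by_cases hl : ∃ t, l = .b i.succ :: t
  · obtain ⟨t, rfl⟩ := hl
    rw [mulGenₗ_ofWord_cab, map_neg, mulGenₗ_b_ofWord,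
      ofWord_of_isReducible K (isReducible_ba i _), neg_zero]
  · rw [mulGenₗ_ofWord K (by simpa [HasCabPrefix] using hl), mulGenₗ_b_ofWord,
      ofWord_of_isReducible K (isReducible_bca i _)]

lemma mulGenₗ_cc (i : Fin n) : mulGenₗ K (.c i.castSucc) * mulGenₗ K (.c i.succ) = 0 := by
  refine ext_ofWord K fun ⟨l, _⟩ => ?_
  simp only [Module.End.mul_apply, LinearMap.zero_apply]
  by_cases hl : ∃ t, l = .a i.succ :: .b i.succ :: t
  · obtain ⟨t, rfl⟩ := hl
    rw [mulGenₗ_ofWord_cab, map_neg, neg_eq_zero]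
    rcases Fin.eq_zero_or_eq_succ i.castSucc with h0 | ⟨k, hk⟩
    · rw [h0, mulGenₗ_c_zero_ofWord, ofWord_of_isReducible K (isReducible_ca_zero _)]
    · rw [hk, mulGenₗ_ofWord_cab, neg_eq_zero,
        ofWord_of_isReducible K (((isReducible_cc k t).cons _).cons _)]
  · rw [mulGenₗ_ofWord K (by simpa [HasCabPrefix] using hl),
      mulGenₗ_ofWord K (by simp [HasCabPrefix]),
      ofWord_of_isReducible K (isReducible_cc i _)]

theorem satisfiesRels_mulGenₗ : SatisfiesRels (mulGenₗ K (n := n)) where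
  abc_last := mulGenₗ_abc_last K
  ca_zero := ext_ofWord K fun ⟨l, _⟩ => by
    rw [Module.End.mul_apply, mulGenₗ_a_ofWord, mulGenₗ_c_zero_ofWord,
      ofWord_of_isReducible K (isReducible_ca_zero _), LinearMap.zero_apply]
  abc_add_cab := mulGenₗ_abc_add_cab K
  bca := mulGenₗ_bca K
  cc := mulGenₗ_cc K
  ba i := ext_ofWord K fun ⟨l, _⟩ => by
    rw [Module.End.mul_apply, mulGenₗ_a_ofWord, mulGenₗ_b_ofWord,
      ofWord_of_isReducible K (isReducible_ba i _), LinearMap.zero_apply]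

end Action

section Basis

variable (K : Type) [Field K] {n : ℕ}

noncomputable def liftB {A : Type*} [Semiring A] [Algebra K A] (x : Gen n → A)
    (hx : SatisfiesRels x) : B K n →ₐ[K] A :=
  RingQuot.liftAlgHom K ⟨FreeAlgebra.lift K x, by
    rintro r _ ⟨hr, rfl⟩
    rw [map_zero]
    exact (satisfiesRels_iff (FreeAlgebra.lift K x)).1 (by simpa using hx) r hr⟩

lemma liftB_πB {A : Type*} [Semiring A] [Algebra K A] (x : Gen n → A) (hx : SatisfiesRels x)
    (y : FA K n) : liftB K x hx (πB K n y) = FreeAlgebra.lift K x y :=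
  RingQuot.liftAlgHom_mkAlgHom_apply K _ _ y

lemma satisfiesRels_πB : SatisfiesRels fun g : Gen n => πB K n (ι K g) :=
  (satisfiesRels_iff (πB K n)).2 fun _ hr =>
    (RingQuot.mkAlgHom_rel K ⟨hr, rfl⟩).trans (map_zero _)

lemma word_append (l₁ l₂ : List (Gen n)) :
    word K n (l₁ ++ l₂) = word K n l₁ * word K n l₂ := by
  simp [word]

lemma lift_word {A : Type*} [Semiring A] [Algebra K A] (x : Gen n → A) (l : List (Gen n)) :
    FreeAlgebra.lift K x (word K n l) = (l.map x).prod := by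
  simp [word, map_list_prod]

lemma span_range_word : Submodule.span K (Set.range (word K n)) = ⊤ := by
  have : Set.range (word K n) = Submonoid.closure (Set.range (ι K : Gen n → FA K n)) := by
    rw [← FreeMonoid.mrange_lift]
    ext x
    constructor
    · rintro ⟨l, rfl⟩
      exact ⟨FreeMonoid.ofList l, by simp [word, FreeMonoid.lift_apply]⟩
    · rintro ⟨l, rfl⟩
      exact ⟨l.toList, by simp [word, FreeMonoid.lift_apply]⟩
  rw [this, ← Algebra.adjoin_eq_span, FreeAlgebra.adjoin_range_ι, Algebra.top_toSubmodule]

lemma prod_mulGenₗ_ofWord_nil {l : List (Gen n)} (hl : ¬ IsReducible l) :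
    (l.map (mulGenₗ K)).prod (ofWord K []) = ofWord K l := by
  induction l with
  | nil => rfl
  | cons g l ih =>
    rw [List.map_cons, List.prod_cons, Module.End.mul_apply, ih (mt (IsReducible.cons g) hl)]
    refine mulGenₗ_ofWord K ?_
    rintro ⟨i, t, h⟩
    exact hl (h ▸ isReducible_cab i t)

theorem linearIndependent_normalWord :
    LinearIndependent K fun l : NormalWord n => πB K n (word K n l.1) := by
  let ψ := LinearMap.applyₗ (ofWord K ([] : List (Gen n))) ∘ₗ
    (liftB K _ (satisfiesRels_mulGenₗ K)).toLinearMap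
  refine LinearIndependent.of_comp ψ ?_
  convert (Finsupp.basisSingleOne (R := K) (ι := NormalWord n)).linearIndependent
  ext1 l
  simp [ψ, liftB_πB, lift_word, prod_mulGenₗ_ofWord_nil K l.2, ofWord_coe]

def Gen.index : Gen n → ℕ
  | .a j | .b j | .c j => j

def weight (l : List (Gen n)) : ℕ := (l.map Gen.index).sum

lemma πB_word_of_mem_Rwords' {w : List (Gen n)} (hw : w ∈ Rwords' n) :
    πB K n (word K n w) = 0 ∨
      ∃ w', weight w' < weight w ∧ πB K n (word K n w) = -πB K n (word K n w') := by
  obtain ⟨habc, hca, habc_add_cab, hbca, hcc, hba⟩ := satisfiesRels_πB K (n := n)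
  rcases hw with rfl | rfl | ⟨i, rfl | rfl | rfl | rfl⟩
  · left; simpa [word, mul_assoc] using habc
  · left; simpa [word] using hca
  · right
    refine ⟨[.a i.castSucc, .b i.castSucc, .c i.castSucc],
      by simp [weight, Gen.index]; omega, ?_⟩
    simpa [word, mul_assoc] using eq_neg_of_add_eq_zero_right (habc_add_cab i)
  · left; simpa [word, mul_assoc] using hbca i
  · left; simpa [word] using hcc i
  · left; simpa [word] using hba i

theorem πB_word_mem_span (l : List (Gen n)) :
    πB K n (word K n l) ∈
      Submodule.span K (Set.range fun l : NormalWord n => πB K n (word K n l.1)) := by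
  induction hN : weight l using Nat.strong_induction_on generalizing l with
  | _ N ih =>
  by_cases hl : IsReducible l
  · obtain ⟨w, hw, u, v, rfl⟩ := hl
    rcases πB_word_of_mem_Rwords' K hw with h0 | ⟨w', hlt, hw'⟩
    · simp [word_append, h0]
    · have := ih _ (by simp only [weight, List.map_append, List.sum_append] at hN hlt ⊢; omega)
        (u ++ w' ++ v) rfl
      rw [word_append, word_append, map_mul, map_mul] at this ⊢
      -- `α` is explicit since `B` sees two semiring structures on `FreeAlgebra`
      rw [hw', mul_neg (α := B K n), neg_mul (α := B K n)]
      exact neg_mem this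
  · exact Submodule.subset_span ⟨⟨l, hl⟩, rfl⟩

theorem top_le_span_normalWord :
    ⊤ ≤ Submodule.span K (Set.range fun l : NormalWord n => πB K n (word K n l.1)) := by
  rintro x -
  obtain ⟨y, rfl⟩ := RingQuot.mkAlgHom_surjective K (BRel K n) x
  have hy : y ∈ Submodule.span K (Set.range (word K n)) := span_range_word K ▸ trivial
  induction hy using Submodule.span_induction with
  | mem _ h => obtain ⟨l, rfl⟩ := h; exact πB_word_mem_span K l
  | zero => simp
  | add _ _ _ _ h₁ h₂ => simpa using add_mem h₁ h₂
  | smul r _ _ h => simpa using Submodule.smul_mem _ r h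

end Basis

/-- the images under `π_B` of the pure tensors containing no factor from `R'`
form a `K`-vector-space basis of `B`. -/
theorem stmt_0 (K : Type) [Field K] (n : ℕ) :
    ∃ bas : Module.Basis {l : List (Gen n) // ¬ ∃ w ∈ Rwords' n, w <:+: l} K (B K n),
      ∀ l, bas l = πB K n (word K n l.val) :=
  ⟨.mk (linearIndependent_normalWord K) (top_le_span_normalWord K), Module.Basis.mk_apply _ _⟩
end

section
/- The following equalities of left ideals of B hold: l.ann_B(b_n c_n) = B a_n, l.ann_B(c_n) = B a_n b_n + B c_{n−1}, and l.ann_B(a_0) = l.ann_B(a_0 b_0) = B b_1 + B c_0 (where b_1 = 0 if n = 0 and c_{n−1} = 0 if n = 0, by the stated conventions). -/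
namespace RingQuot

variable {A : Type*} [Ring A] (S : Set A)

theorem ker_mkRingHom_eq_span :
    TwoSidedIdeal.ker (mkRingHom fun x y : A => x ∈ S ∧ y = 0) = TwoSidedIdeal.span S := by
  apply le_antisymm
  · intro z hz
    rw [TwoSidedIdeal.mem_ker] at hz
    rw [← TwoSidedIdeal.ker_ringCon_mk' (TwoSidedIdeal.span S), TwoSidedIdeal.mem_ker]
    have hlift := lift_mkRingHom_apply (TwoSidedIdeal.span S).ringCon.mk'
      (r := fun x y : A => x ∈ S ∧ y = 0) (fun x y hxy => by
        rw [← sub_eq_zero, ← map_sub, ← TwoSidedIdeal.mem_ker,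
          TwoSidedIdeal.ker_ringCon_mk', hxy.2, sub_zero]
        exact TwoSidedIdeal.subset_span hxy.1) z
    rw [← hlift, hz, map_zero]
  · rw [TwoSidedIdeal.span_le]
    intro s hs
    rw [SetLike.mem_coe, TwoSidedIdeal.mem_ker, ← map_zero (mkRingHom _)]
    exact mkRingHom_rel ⟨hs, rfl⟩

theorem ker_mkAlgHom_eq_span (R : Type*) [CommSemiring R] [Algebra R A] :
    TwoSidedIdeal.ker (mkAlgHom R fun x y : A => x ∈ S ∧ y = 0) = TwoSidedIdeal.span S := by
  rw [← ker_mkRingHom_eq_span, ← mkAlgHom_coe R]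
  rfl

end RingQuot

namespace FreeAlgebra

section Semiring

variable {R X : Type*} [CommSemiring R] [DecidableEq X]

/-- `rightDeriv g` below is the right partial derivative `∂_g`, sending a word `w g` to `w` and
every other word to `0`. It is the corner entry of this algebra map: `f ↦ !![f, ∂_g f; 0, ε f]`
is multiplicative precisely because of the twisted Leibniz rule
`∂_g (f h) = f ∂_g h + ∂_g f ε h`, where `ε = algebraMapInv` is the augmentation. -/
def rightDerivMatrix (g : X) : FreeAlgebra R X →ₐ[R] Matrix (Fin 2) (Fin 2) (FreeAlgebra R X) :=
  lift R fun x => !![ι R x, if x = g then 1 else 0; 0, 0]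

def rightDeriv (g : X) : FreeAlgebra R X →ₗ[R] FreeAlgebra R X :=
  Matrix.entryLinearMap R _ 0 1 ∘ₗ (rightDerivMatrix g).toLinearMap

theorem rightDeriv_apply (g : X) (f : FreeAlgebra R X) :
    rightDeriv g f = rightDerivMatrix g f 0 1 := rfl

theorem rightDerivMatrix_apply (g : X) (f : FreeAlgebra R X) :
    rightDerivMatrix g f = !![f, rightDeriv g f; 0, algebraMap R _ (algebraMapInv f)] := by
  induction f using FreeAlgebra.induction with
  | grade0 r =>
    ext i j
    fin_cases i <;> fin_cases j <;> simp [rightDeriv_apply, Matrix.algebraMap_matrix_apply]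
  | grade1 x =>
    ext i j
    fin_cases i <;> fin_cases j <;> simp [rightDeriv_apply, rightDerivMatrix, algebraMapInv]
  | mul a b ha hb =>
    rw [rightDeriv_apply, map_mul, ha, hb, Matrix.mul_fin_two]
    simp
  | add a b ha hb =>
    rw [rightDeriv_apply, map_add, ha, hb]
    ext i j
    fin_cases i <;> fin_cases j <;> simp

theorem rightDeriv_mul (g : X) (f h : FreeAlgebra R X) :
    rightDeriv g (f * h) =
      f * rightDeriv g h + rightDeriv g f * algebraMap R _ (algebraMapInv h) := by
  rw [rightDeriv_apply, map_mul, rightDerivMatrix_apply, rightDerivMatrix_apply,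
    Matrix.mul_fin_two]
  simp

theorem rightDeriv_ι (g x : X) : rightDeriv g (ι R x) = if x = g then 1 else 0 := by
  simp [rightDeriv_apply, rightDerivMatrix]

theorem rightDeriv_mul_of_algebraMapInv_eq_zero (g : X) (f : FreeAlgebra R X)
    {h : FreeAlgebra R X} (hh : algebraMapInv h = 0) :
    rightDeriv g (f * h) = f * rightDeriv g h := by
  simp [rightDeriv_mul, hh]

theorem rightDeriv_mul_ι_self (g : X) (f : FreeAlgebra R X) : rightDeriv g (f * ι R g) = f := by
  simp [rightDeriv_mul, rightDeriv_ι, algebraMapInv]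

end Semiring

section Ring

variable {R X : Type*} [CommRing R] {S : Set (FreeAlgebra R X)}

theorem algebraMapInv_eq_zero_of_mem_span (hS : ∀ s ∈ S, algebraMapInv s = 0)
    {z : FreeAlgebra R X} (hz : z ∈ TwoSidedIdeal.span S) : algebraMapInv z = 0 := by
  rw [← TwoSidedIdeal.mem_ker]
  exact TwoSidedIdeal.span_le.2 (fun s hs => TwoSidedIdeal.mem_ker _ |>.2 (hS s hs)) hz

variable {Q : Type*} [Ring Q] [Algebra R Q] {π : FreeAlgebra R X →ₐ[R] Q}

theorem asIdeal_span_le_comap (hπ : TwoSidedIdeal.ker π = TwoSidedIdeal.span S) (I : Ideal Q) :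
    (TwoSidedIdeal.span S).asIdeal ≤ I.comap π := by
  intro z hz
  rw [TwoSidedIdeal.mem_asIdeal, ← hπ, TwoSidedIdeal.mem_ker] at hz
  rw [Ideal.mem_comap, hz]
  exact I.zero_mem

variable [DecidableEq X]

theorem rightDeriv_mem_of_mem_span (g : X) {L : Ideal (FreeAlgebra R X)}
    (hS : ∀ s ∈ S, algebraMapInv s = 0) (hSL : (TwoSidedIdeal.span S).asIdeal ≤ L)
    (hg : ∀ s ∈ S, rightDeriv g s ∈ L) {z : FreeAlgebra R X} (hz : z ∈ TwoSidedIdeal.span S) :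
    rightDeriv g z ∈ L := by
  induction hz using TwoSidedIdeal.span_induction with
  | mem s hs => exact hg s hs
  | zero => simp
  | add x y _ _ hx hy => simpa using L.add_mem hx hy
  | neg x _ hx => simpa using L.neg_mem hx
  | left_absorb a x hxS hx =>
    rw [rightDeriv_mul_of_algebraMapInv_eq_zero _ _ (algebraMapInv_eq_zero_of_mem_span hS hxS)]
    exact L.mul_mem_left a hx
  | right_absorb b x hxS hx =>
    rw [rightDeriv_mul, ← Algebra.commutes]
    exact L.add_mem (hSL (TwoSidedIdeal.mem_asIdeal.2 (TwoSidedIdeal.mul_mem_right _ _ _ hxS)))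
      (L.mul_mem_left _ hx)

/-- On the augmentation ideal `∂_g (a y) = a ∂_g y`, which makes this a left ideal. -/
def rightDerivComap (g : X) (L : Ideal (FreeAlgebra R X)) : Ideal (FreeAlgebra R X) where
  carrier := {y | algebraMapInv y = 0 ∧ rightDeriv g y ∈ L}
  add_mem' hx hy := ⟨by simp [hx.1, hy.1], by simpa using L.add_mem hx.2 hy.2⟩
  zero_mem' := by simp
  smul_mem' a y hy := by
    refine ⟨by simp [hy.1], ?_⟩
    rw [smul_eq_mul, rightDeriv_mul_of_algebraMapInv_eq_zero _ _ hy.1]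
    exact L.mul_mem_left a hy.2

theorem map_mem_of_map_mul_ι_eq_zero (hπ : TwoSidedIdeal.ker π = TwoSidedIdeal.span S)
    (g : X) {I : Ideal Q} (hS : ∀ s ∈ S, algebraMapInv s = 0)
    (hg : ∀ s ∈ S, π (rightDeriv g s) ∈ I) {u : FreeAlgebra R X} (hu : π (u * ι R g) = 0) :
    π u ∈ I := by
  have hJ : u * ι R g ∈ TwoSidedIdeal.span S := by rwa [← hπ, TwoSidedIdeal.mem_ker]
  simpa only [rightDeriv_mul_ι_self, Ideal.mem_comap] using
    rightDeriv_mem_of_mem_span g hS (asIdeal_span_le_comap hπ I) hg hJ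

theorem map_mem_of_map_mul_ι_mul_ι_eq_zero (hπ : TwoSidedIdeal.ker π = TwoSidedIdeal.span S)
    (g₀ g₁ : X) {I : Ideal Q} (hS : ∀ s ∈ S, algebraMapInv s = 0)
    (hg₁ : ∀ s ∈ S, algebraMapInv (rightDeriv g₁ s) = 0)
    (hg₀ : ∀ s ∈ S, π (rightDeriv g₀ s) ∈ I)
    (hg₀₁ : ∀ s ∈ S, π (rightDeriv g₀ (rightDeriv g₁ s)) ∈ I)
    {u : FreeAlgebra R X} (hu : π (u * ι R g₀ * ι R g₁) = 0) : π u ∈ I := by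
  have hJ : u * ι R g₀ * ι R g₁ ∈ TwoSidedIdeal.span S := by rwa [← hπ, TwoSidedIdeal.mem_ker]
  have hJ₀ : (TwoSidedIdeal.span S).asIdeal ≤ rightDerivComap g₀ (I.comap π) := fun z hz =>
    ⟨algebraMapInv_eq_zero_of_mem_span hS hz,
      rightDeriv_mem_of_mem_span g₀ hS (asIdeal_span_le_comap hπ I) hg₀ hz⟩
  have := rightDeriv_mem_of_mem_span g₁ hS hJ₀ (fun s hs => ⟨hg₁ s hs, hg₀₁ s hs⟩) hJ
  simpa only [rightDeriv_mul_ι_self, Ideal.mem_comap] using this.2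

end Ring

end FreeAlgebra

deriving instance DecidableEq for Gen

open FreeAlgebra

section Letters

variable (K : Type) [Field K] {n : ℕ}

def letter (L : Fin (n + 1) → Gen n) (i : ℤ) : FA K n :=
  if h : 0 ≤ i ∧ i ≤ (n : ℤ) then ι K (L ⟨i.toNat, by omega⟩) else 0

variable {K}

@[simp] theorem Gen.a_injective : Function.Injective (Gen.a (n := n)) := fun _ _ => Gen.a.inj
@[simp] theorem Gen.b_injective : Function.Injective (Gen.b (n := n)) := fun _ _ => Gen.b.inj
@[simp] theorem Gen.c_injective : Function.Injective (Gen.c (n := n)) := fun _ _ => Gen.c.inj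

theorem ga_eq_letter : ga K n = letter K Gen.a := rfl
theorem gb_eq_letter : gb K n = letter K Gen.b := rfl
theorem gc_eq_letter : gc K n = letter K Gen.c := rfl

theorem letter_natCast (L : Fin (n + 1) → Gen n) {i : ℕ} (hi : i ≤ n) :
    letter K L i = ι K (L ⟨i, by omega⟩) := by
  rw [letter, dif_pos ⟨by positivity, by exact_mod_cast hi⟩]
  rfl

@[simp]
theorem algebraMapInv_letter (L : Fin (n + 1) → Gen n) (i : ℤ) :
    algebraMapInv (letter K L i) = 0 := by
  unfold letter
  split_ifs <;> simp [algebraMapInv]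

@[simp]
theorem rightDeriv_letter_self {L : Fin (n + 1) → Gen n} (hL : Function.Injective L)
    (j : Fin (n + 1)) (i : ℤ) :
    rightDeriv (L j) (letter K L i) = if i = j then 1 else 0 := by
  unfold letter
  split_ifs with h hij hij <;> simp_all [rightDeriv_ι, hL.eq_iff, Fin.ext_iff] <;> omega

@[simp]
theorem rightDeriv_letter_of_ne {L : Fin (n + 1) → Gen n} {g : Gen n} (hg : ∀ j, L j ≠ g)
    (i : ℤ) : rightDeriv g (letter K L i) = 0 := by
  unfold letter
  split_ifs <;> simp [rightDeriv_ι, hg]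

@[simp]
theorem rightDeriv_mul_letter (g : Gen n) (f : FA K n) (L : Fin (n + 1) → Gen n) (i : ℤ) :
    rightDeriv g (f * letter K L i) = f * rightDeriv g (letter K L i) :=
  rightDeriv_mul_of_algebraMapInv_eq_zero g f (algebraMapInv_letter L i)

end Letters

section Relations

variable {K : Type} [Field K] {n : ℕ} {r : FA K n}

theorem algebraMapInv_of_mem_rels (hr : r ∈ rels K n) : algebraMapInv r = 0 := by
  rcases hr with rfl | rfl | ⟨i, hi, rfl | rfl | rfl | rfl⟩ <;>
    simp [ga_eq_letter, gb_eq_letter, gc_eq_letter]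

theorem rightDeriv_c_last_of_mem_rels (hr : r ∈ rels K n) :
    rightDeriv (Gen.c (Fin.last n)) r = 0 ∨
      rightDeriv (Gen.c (Fin.last n)) r = ga K n n * gb K n n ∨
      rightDeriv (Gen.c (Fin.last n)) r = gc K n (n - 1) := by
  rcases hr with rfl | rfl | ⟨i, hi, rfl | rfl | rfl | rfl⟩ <;>
    simp [-mul_eq_zero, -ite_eq_right_iff, ga_eq_letter, gb_eq_letter, gc_eq_letter]
  all_goals split_ifs with h
  · omega
  · exact .inl rfl
  · exact .inr (.inr (by rw [show (n : ℤ) - 1 = i by omega]))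
  · exact .inl rfl

theorem rightDeriv_b_last_of_mem_rels (hr : r ∈ rels K n) :
    rightDeriv (Gen.b (Fin.last n)) r = 0 ∨
      rightDeriv (Gen.b (Fin.last n)) r = gc K n n * ga K n n := by
  rcases hr with rfl | rfl | ⟨i, hi, rfl | rfl | rfl | rfl⟩ <;>
    simp [-mul_eq_zero, -ite_eq_right_iff, ga_eq_letter, gb_eq_letter, gc_eq_letter]
  split_ifs with h
  · exact .inr (by rw [h])
  · exact .inl rfl

theorem rightDeriv_a_zero_of_mem_rels (hr : r ∈ rels K n) :
    rightDeriv (Gen.a 0) r = 0 ∨ rightDeriv (Gen.a 0) r = gc K n 0 ∨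
      rightDeriv (Gen.a 0) r = gb K n 1 := by
  rcases hr with rfl | rfl | ⟨i, hi, rfl | rfl | rfl | rfl⟩ <;>
    simp [-mul_eq_zero, -ite_eq_right_iff, ga_eq_letter, gb_eq_letter, gc_eq_letter,
      Nat.cast_add_one_ne_zero]
  split_ifs with h
  · exact .inr (.inr (by rw [h, Nat.cast_zero, zero_add]))
  · exact .inl rfl

theorem rightDeriv_b_zero_of_mem_rels (hr : r ∈ rels K n) : rightDeriv (Gen.b 0) r = 0 := by
  rcases hr with rfl | rfl | ⟨i, hi, rfl | rfl | rfl | rfl⟩ <;>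
    simp [ga_eq_letter, gb_eq_letter, gc_eq_letter, Nat.cast_add_one_ne_zero]

end Relations

section Annihilators

variable {K : Type} [Field K] {n : ℕ}

@[simp]
theorem mem_lann {w x : B K n} : w ∈ lann K n x ↔ w * x = 0 := Iff.rfl

theorem ker_πB : TwoSidedIdeal.ker (πB K n) = TwoSidedIdeal.span (rels K n) :=
  RingQuot.ker_mkAlgHom_eq_span _ K

theorem πB_eq_zero_of_mem_rels {r : FA K n} (hr : r ∈ rels K n) : πB K n r = 0 := by
  rw [← map_zero (πB K n)]
  exact RingQuot.mkAlgHom_rel K ⟨hr, rfl⟩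

theorem span_singleton_le_lann {x y : B K n} (h : x * y = 0) : Ideal.span {x} ≤ lann K n y :=
  Ideal.span_singleton_le_iff_mem _ |>.2 h

theorem gb_last : gb K n n = ι K (Gen.b (Fin.last n)) := letter_natCast Gen.b le_rfl
theorem gc_last : gc K n n = ι K (Gen.c (Fin.last n)) := letter_natCast Gen.c le_rfl
theorem ga_zero : ga K n 0 = ι K (Gen.a 0) := letter_natCast (i := 0) Gen.a n.zero_le
theorem gb_zero : gb K n 0 = ι K (Gen.b 0) := letter_natCast (i := 0) Gen.b n.zero_le

theorem aB_mul_bB_mul_cB_last : aB K n n * bB K n n * cB K n n = 0 := by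
  simp only [aB, bB, cB, ← map_mul]
  exact πB_eq_zero_of_mem_rels (.inl rfl)

theorem cB_pred_mul_cB_last : cB K n (n - 1) * cB K n n = 0 := by
  rcases n with _ | m
  · simp [cB, gc]
  · rw [cB, cB, ← map_mul]
    apply πB_eq_zero_of_mem_rels
    refine .inr (.inr ⟨m, m.lt_succ_self, .inr (.inr (.inl ?_))⟩)
    simp

theorem bB_one_mul_aB_zero : bB K n 1 * aB K n 0 = 0 := by
  rcases n with _ | m
  · simp [bB, gb]
  · rw [bB, aB, ← map_mul]
    exact πB_eq_zero_of_mem_rels (.inr (.inr ⟨0, m.succ_pos, .inr (.inr (.inr (by simp)))⟩))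

theorem cB_zero_mul_aB_zero : cB K n 0 * aB K n 0 = 0 := by
  rw [cB, aB, ← map_mul]
  exact πB_eq_zero_of_mem_rels (.inr (.inl rfl))

theorem lann_cB_last :
    lann K n (cB K n n) = Ideal.span {aB K n n * bB K n n} + Ideal.span {cB K n (n - 1)} := by
  refine le_antisymm (fun w hw => ?_) (sup_le (span_singleton_le_lann aB_mul_bB_mul_cB_last)
    (span_singleton_le_lann cB_pred_mul_cB_last))
  obtain ⟨u, rfl⟩ := RingQuot.mkAlgHom_surjective K (BRel K n) w
  refine map_mem_of_map_mul_ι_eq_zero ker_πB (Gen.c (Fin.last n))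
    (fun _ => algebraMapInv_of_mem_rels) (fun r hr => ?_) ?_
  · rcases rightDeriv_c_last_of_mem_rels hr with h | h | h <;> rw [h]
    · simp
    · exact Submodule.mem_sup_left (by rw [map_mul]; exact Ideal.mem_span_singleton_self _)
    · exact Submodule.mem_sup_right (Ideal.mem_span_singleton_self _)
  · rw [map_mul, ← gc_last]
    exact hw

theorem lann_bB_mul_cB_last : lann K n (bB K n n * cB K n n) = Ideal.span {aB K n n} := by
  refine le_antisymm (fun w hw => ?_)
    (span_singleton_le_lann (by rw [← mul_assoc]; exact aB_mul_bB_mul_cB_last))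
  obtain ⟨u, rfl⟩ := RingQuot.mkAlgHom_surjective K (BRel K n) w
  refine map_mem_of_map_mul_ι_mul_ι_eq_zero ker_πB (Gen.b (Fin.last n)) (Gen.c (Fin.last n))
    (fun _ => algebraMapInv_of_mem_rels) (fun r hr => ?_) (fun r hr => ?_) (fun r hr => ?_) ?_
  · rcases rightDeriv_c_last_of_mem_rels hr with h | h | h <;>
      simp [h, ga_eq_letter, gb_eq_letter, gc_eq_letter]
  · rcases rightDeriv_b_last_of_mem_rels hr with h | h <;> rw [h]
    · simp
    · rw [map_mul]
      exact Ideal.mul_mem_left _ _ (Ideal.mem_span_singleton_self _)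
  · rcases rightDeriv_c_last_of_mem_rels hr with h | h | h <;> rw [h]
    · simp
    · simp only [gb_eq_letter, rightDeriv_mul_letter, rightDeriv_letter_self Gen.b_injective,
        Fin.val_last, if_true, mul_one]
      exact Ideal.mem_span_singleton_self (aB K n n)
    · simp [gc_eq_letter]
  · rw [map_mul, map_mul, ← gb_last, ← gc_last, mul_assoc]
    exact hw

theorem lann_aB_zero : lann K n (aB K n 0) = Ideal.span {bB K n 1} + Ideal.span {cB K n 0} := by
  refine le_antisymm (fun w hw => ?_) (sup_le (span_singleton_le_lann bB_one_mul_aB_zero)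
    (span_singleton_le_lann cB_zero_mul_aB_zero))
  obtain ⟨u, rfl⟩ := RingQuot.mkAlgHom_surjective K (BRel K n) w
  refine map_mem_of_map_mul_ι_eq_zero ker_πB (Gen.a 0)
    (fun _ => algebraMapInv_of_mem_rels) (fun r hr => ?_) ?_
  · rcases rightDeriv_a_zero_of_mem_rels hr with h | h | h <;> rw [h]
    · simp
    · exact Submodule.mem_sup_right (Ideal.mem_span_singleton_self _)
    · exact Submodule.mem_sup_left (Ideal.mem_span_singleton_self _)
  · rw [map_mul, ← ga_zero]
    exact hw

theorem lann_aB_zero_mul_bB_zero : lann K n (aB K n 0 * bB K n 0) = lann K n (aB K n 0) := by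
  ext w
  refine ⟨fun hw => ?_, fun hw => by rw [mem_lann, ← mul_assoc, mem_lann.1 hw, zero_mul]⟩
  obtain ⟨u, rfl⟩ := RingQuot.mkAlgHom_surjective K (BRel K n) w
  have := map_mem_of_map_mul_ι_eq_zero ker_πB (Gen.b 0) (I := ⊥) (u := u * ga K n 0)
    (fun _ => algebraMapInv_of_mem_rels) (fun r hr => by simp [rightDeriv_b_zero_of_mem_rels hr])
    (by rw [map_mul, map_mul, ← gb_zero, mul_assoc]; exact hw)
  rw [Ideal.mem_bot, map_mul] at this
  exact this

end Annihilators

/-- left annihilators of `b_n c_n`, `c_n`, `a_0`, and `a_0 b_0`. -/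
theorem stmt_4 (K : Type) [Field K] (n : ℕ) :
    lann K n (bB K n n * cB K n n) = Ideal.span {aB K n n} ∧
    lann K n (cB K n n) =
      Ideal.span {aB K n n * bB K n n} + Ideal.span {cB K n ((n : ℤ) - 1)} ∧
    lann K n (aB K n 0) = Ideal.span {bB K n 1} + Ideal.span {cB K n 0} ∧
    lann K n (aB K n 0 * bB K n 0) = Ideal.span {bB K n 1} + Ideal.span {cB K n 0} :=
  ⟨lann_bB_mul_cB_last, lann_cB_last, lann_aB_zero, lann_aB_zero_mul_bB_zero.trans lann_aB_zero⟩
end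

section
/- Let A be an augmented K-algebra with augmentation ε : A → K and A₊ = ker ε, and let (Q_•, d_•) be a minimal resolution of the trivial left A-module K = A/A₊ by projective left A-modules with Q₀ = A, minimality meaning im(d_j) ⊆ A₊ Q_{j−1} for all j ≥ 1. Fix n ≥ 0; let U^n denote the space of families f = (f_j : Q_j → Q_{j−n})_j of A-module maps, Z^n ⊆ U^n the cocycles (∂(f) = 0) and B^n ⊆ Z^n the coboundaries (f = ∂(h) for some h ∈ U^{n−1}), where ∂(f) = d∘f − (−1)^{|f|} f∘d. Define the K-linear map p : U^n → Hom_A(Q_n, K) by p(f) = ε ∘ f_n. If H ⊆ Z^n is a K-subspace such that p restricts to a bijection from H onto Hom_A(Q_n, K), then Z^n = B^n ⊕ H (internal direct sum of K-vector spaces). -/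
section

variable (K : Type) [Field K] (A : Type) [Ring A] [Algebra K A]
variable (Q : ℕ → Type) [∀ j, AddCommGroup (Q j)] [∀ j, Module A (Q j)]
variable (d : ∀ j, Q (j+1) →ₗ[A] Q j)

/-- A family `f ∈ U^n` (encoded by its components `f m : Q (n+m) → Q m` in degrees `≥ n`;
lower components are zero) is a cocycle if `∂(f) = 0`, i.e.
`d ∘ f_j = (−1)ⁿ f_{j−1} ∘ d_j` for all `j > n`. -/
def IsCocycle (n : ℕ) (f : ∀ m, Q (n + m) →ₗ[A] Q m) : Prop :=
  ∀ m, (d m) ∘ₗ (f (m+1)) =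
    ((-1 : ℤ)^n) • (((f m) ∘ₗ (d (n + m)) : Q (n + (m+1)) →ₗ[A] Q m))

/-- A family `g ∈ U^n` is a coboundary if `g = ∂(h)` for some `h ∈ U^{n−1}`;
for `n ≥ 1` such an `h` has components `h m : Q (n+m) → Q (m+1)` in degrees `≥ n` together
with one extra component `h' : Q (n−1) → Q 0`, and `∂(h)_j = d ∘ h_j − (−1)^{n−1} h_{j−1} ∘ d_j`;
for `n = 0`, `h ∈ U^{-1}` has components `h m : Q m → Q (m+1)` for all `m ≥ 0` and
`∂(h)_j = d ∘ h_j + h_{j−1} ∘ d_j`. -/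
def IsCoboundary : ∀ n : ℕ, (∀ m, Q (n + m) →ₗ[A] Q m) → Prop
  | 0, g =>
    ∃ h : ∀ m, Q (0 + m) →ₗ[A] Q (m+1),
      g 0 = (d 0) ∘ₗ (h 0) ∧
      ∀ m, g (m+1) = (d (m+1)) ∘ₗ (h (m+1)) +
        (((h m) ∘ₗ (d (0 + m)) : Q (0 + (m+1)) →ₗ[A] Q (m+1)))
  | (k+1), g =>
    ∃ (h : ∀ m, Q ((k+1) + m) →ₗ[A] Q (m+1)) (h' : Q k →ₗ[A] Q 0),
      g 0 = (d 0) ∘ₗ (h 0) -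
        ((-1 : ℤ)^k) • ((h' ∘ₗ (d k) : Q ((k+1) + 0) →ₗ[A] Q 0)) ∧
      ∀ m, g (m+1) = (d (m+1)) ∘ₗ (h (m+1)) -
        ((-1 : ℤ)^k) • (((h m) ∘ₗ (d ((k+1) + m)) : Q ((k+1) + (m+1)) →ₗ[A] Q (m+1)))

end


/-!
A cocycle is determined modulo coboundaries by `ε ∘ f_n`. Coboundaries have `ε ∘ f_n = 0`: the
`d_0 ∘ h` part lands in `im d_0 = ker ε`, and by minimality the `h' ∘ d_n` part lands in
`A₊ Q_0`. Conversely, if `ε ∘ f_n = 0` then `f_n` lands in `im d_0`, and projectivity of the `Q_j`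
together with exactness lifts `f` degree by degree to a null-homotopy. Subtracting from a cocycle
the element of `H` with the same image under `p` therefore leaves a coboundary.
-/

theorem Module.Projective.exists_comp_eq_of_range_le {R P M N : Type*} [Ring R]
    [AddCommGroup P] [Module R P] [AddCommGroup M] [Module R M] [AddCommGroup N] [Module R N]
    [Module.Projective R P] {φ : P →ₗ[R] N} {ψ : M →ₗ[R] N}
    (hle : LinearMap.range φ ≤ LinearMap.range ψ) :
    ∃ g : P →ₗ[R] M, ψ ∘ₗ g = φ := by
  obtain ⟨g, hg⟩ := Module.projective_lifting_property ψ.rangeRestrict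
    (φ.codRestrict _ fun x => hle ⟨x, rfl⟩) ψ.surjective_rangeRestrict
  exact ⟨g, LinearMap.ext fun x => congrArg Subtype.val (LinearMap.congr_fun hg x)⟩

theorem exists_seq_of_forall_exists_succ {T : ℕ → Sort*} {R : ∀ m, T m → T (m+1) → Prop}
    (t₀ : T 0) (step : ∀ m (t : T m), ∃ t', R m t t') :
    ∃ s : ∀ m, T m, s 0 = t₀ ∧ ∀ m, R m (s m) (s (m+1)) := by
  choose f hf using step
  exact ⟨fun m => Nat.rec t₀ f m, rfl, fun m => hf m _⟩

section Cochains

variable {A : Type} [Ring A] {Q : ℕ → Type} [∀ j, AddCommGroup (Q j)] [∀ j, Module A (Q j)]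
  {d : ∀ j, Q (j+1) →ₗ[A] Q j} {n : ℕ} {f g : ∀ m, Q (n + m) →ₗ[A] Q m}

theorem IsCocycle.add (hf : IsCocycle A Q d n f) (hg : IsCocycle A Q d n g) :
    IsCocycle A Q d n (f + g) := fun m => by
  simp only [Pi.add_apply, LinearMap.comp_add, LinearMap.add_comp, hf m, hg m, smul_add]

theorem IsCocycle.sub (hf : IsCocycle A Q d n f) (hg : IsCocycle A Q d n g) :
    IsCocycle A Q d n (f - g) := fun m => by
  simp only [Pi.sub_apply, LinearMap.comp_sub, LinearMap.sub_comp, hf m, hg m, smul_sub]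

/-- The extra term `c` plays the role of the component `h' ∘ d` of a homotopy into `Q 0`. -/
theorem isCocycle_of_eq_homotopy (hdd : ∀ j, d j ∘ₗ d (j+1) = 0)
    (h : ∀ m, Q (n + m) →ₗ[A] Q (m+1)) (c : Q (n + 0) →ₗ[A] Q 0) (hc : c ∘ₗ d (n + 0) = 0)
    (hf₀ : f 0 = d 0 ∘ₗ h 0 + c)
    (hf : ∀ m, f (m+1) = d (m+1) ∘ₗ h (m+1) +
      ((-1 : ℤ)^n) • ((h m ∘ₗ d (n + m) : Q (n + (m+1)) →ₗ[A] Q (m+1)))) :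
    IsCocycle A Q d n f := by
  have hdh : ∀ m, f m ∘ₗ d (n + m) = (d m ∘ₗ h m) ∘ₗ d (n + m) := by
    rintro (_ | m)
    · rw [hf₀, LinearMap.add_comp, hc]
      exact add_zero _
    · rw [hf m, LinearMap.add_comp, LinearMap.smul_comp, LinearMap.comp_assoc _ (d (n + m)),
        show d (n + m) ∘ₗ d (n + (m+1)) = 0 from hdd (n + m), LinearMap.comp_zero, smul_zero]
      exact add_zero _
  intro m
  rw [hf m, LinearMap.comp_add, LinearMap.comp_smul, ← LinearMap.comp_assoc, hdd m,
    LinearMap.zero_comp, zero_add, ← LinearMap.comp_assoc, hdh m]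

theorem isCoboundary_of_eq_homotopy (h : ∀ m, Q (n + m) →ₗ[A] Q (m+1))
    (hf₀ : f 0 = d 0 ∘ₗ h 0)
    (hf : ∀ m, f (m+1) = d (m+1) ∘ₗ h (m+1) +
      ((-1 : ℤ)^n) • ((h m ∘ₗ d (n + m) : Q (n + (m+1)) →ₗ[A] Q (m+1)))) :
    IsCoboundary A Q d n f := by
  cases n with
  | zero => exact ⟨h, hf₀, fun m => by rw [hf m, pow_zero, one_smul]⟩
  | succ k =>
    refine ⟨h, 0, by rw [hf₀, LinearMap.zero_comp, smul_zero, sub_zero], fun m => ?_⟩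
    rw [hf m, pow_succ, mul_neg_one, neg_smul, sub_eq_add_neg]

theorem IsCoboundary.isCocycle (hdd : ∀ j, d j ∘ₗ d (j+1) = 0) (hf : IsCoboundary A Q d n f) :
    IsCocycle A Q d n f := by
  cases n with
  | zero =>
    obtain ⟨h, hf₀, hf⟩ := hf
    refine isCocycle_of_eq_homotopy hdd h 0 (LinearMap.zero_comp _) (hf₀.trans (add_zero _).symm)
      fun m => ?_
    rw [hf m, pow_zero, one_smul]
  | succ k =>
    obtain ⟨h, h', hf₀, hf⟩ := hf
    refine isCocycle_of_eq_homotopy hdd h (-((-1 : ℤ)^k • (h' ∘ₗ d k))) ?_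
      (by rw [hf₀, sub_eq_add_neg]) fun m => ?_
    · rw [LinearMap.neg_comp, LinearMap.smul_comp, LinearMap.comp_assoc,
        show d k ∘ₗ d (k + 1 + 0) = 0 from hdd k, LinearMap.comp_zero, smul_zero, neg_zero]
    · rw [hf m, pow_succ, mul_neg_one, neg_smul, sub_eq_add_neg]

theorem exists_homotopy_succ [∀ j, Module.Projective A (Q j)]
    (hexact : ∀ j, LinearMap.range (d (j+1)) = LinearMap.ker (d j))
    (hf : IsCocycle A Q d n f) (m : ℕ) (h : Q (n + m) →ₗ[A] Q (m+1))
    (hh : f m ∘ₗ d (n + m) = (d m ∘ₗ h) ∘ₗ d (n + m)) :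
    ∃ h' : Q (n + (m+1)) →ₗ[A] Q (m+2),
      d (m+1) ∘ₗ h' = f (m+1) - ((-1 : ℤ)^n) • ((h ∘ₗ d (n + m) : Q (n + (m+1)) →ₗ[A] Q (m+1))) ∧
      f (m+1) ∘ₗ d (n + (m+1)) = (d (m+1) ∘ₗ h') ∘ₗ d (n + (m+1)) := by
  have hdd : d (n + m) ∘ₗ d (n + (m+1)) = 0 :=
    LinearMap.range_le_ker_iff.mp (hexact (n + m)).le
  have hc : d m ∘ₗ (f (m+1) -
      ((-1 : ℤ)^n) • ((h ∘ₗ d (n + m) : Q (n + (m+1)) →ₗ[A] Q (m+1)))) = 0 := by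
    rw [LinearMap.comp_sub, LinearMap.comp_smul, hf m, ← LinearMap.comp_assoc, hh, sub_self]
  obtain ⟨h', hh'⟩ := Module.Projective.exists_comp_eq_of_range_le
    ((LinearMap.range_le_ker_iff.mpr hc).trans (hexact m).ge)
  refine ⟨h', hh', ?_⟩
  rw [hh', LinearMap.sub_comp, LinearMap.smul_comp, LinearMap.comp_assoc _ (d (n + m)), hdd,
    LinearMap.comp_zero, smul_zero, sub_zero]

theorem isCoboundary_of_range_le [∀ j, Module.Projective A (Q j)]
    (hexact : ∀ j, LinearMap.range (d (j+1)) = LinearMap.ker (d j))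
    (hf : IsCocycle A Q d n f) (hf₀ : LinearMap.range (f 0) ≤ LinearMap.range (d 0)) :
    IsCoboundary A Q d n f := by
  obtain ⟨h₀, hh₀⟩ := Module.Projective.exists_comp_eq_of_range_le hf₀
  obtain ⟨s, hs₀, hs⟩ := exists_seq_of_forall_exists_succ
    (T := fun m => {h : Q (n + m) →ₗ[A] Q (m+1) // f m ∘ₗ d (n + m) = (d m ∘ₗ h) ∘ₗ d (n + m)})
    (R := fun m t t' => d (m+1) ∘ₗ t'.1 =
      f (m+1) - ((-1 : ℤ)^n) • ((t.1 ∘ₗ d (n + m) : Q (n + (m+1)) →ₗ[A] Q (m+1))))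
    ⟨h₀, by rw [hh₀]⟩ fun m t => by
      obtain ⟨h', hh', hinv⟩ := exists_homotopy_succ hexact hf m t.1 t.2
      exact ⟨⟨h', hinv⟩, hh'⟩
  refine isCoboundary_of_eq_homotopy (fun m => (s m).1) (by rw [hs₀, hh₀]) fun m => ?_
  rw [hs m, sub_add_cancel]

end Cochains

section Augmentation

variable {A : Type} {S M : Type*} [Ring A] [Ring S] [AddCommGroup M] [Module A M]

theorem span_ker_smul_le_comap_ker (ε : A →+* S) (χ : M →ₗ[A] A) :
    Submodule.span A {y : M | ∃ a ∈ RingHom.ker ε, ∃ x : M, y = a • x} ≤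
      Submodule.comap χ (RingHom.ker ε) := by
  rw [Submodule.span_le]
  rintro _ ⟨a, ha, x, rfl⟩
  simp [RingHom.mem_ker.mp ha]

theorem IsCoboundary.range_le_comap_ker {Q : ℕ → Type} [∀ j, AddCommGroup (Q j)]
    [∀ j, Module A (Q j)] {d : ∀ j, Q (j+1) →ₗ[A] Q j} {n : ℕ} {f : ∀ m, Q (n + m) →ₗ[A] Q m}
    (ε : A →+* S) (χ : Q 0 →ₗ[A] A)
    (hd₀ : LinearMap.range (d 0) ≤ Submodule.comap χ (RingHom.ker ε))
    (hmin : ∀ j, LinearMap.range (d j) ≤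
      Submodule.span A {y : Q j | ∃ a ∈ RingHom.ker ε, ∃ x : Q j, y = a • x})
    (hf : IsCoboundary A Q d n f) :
    LinearMap.range (f 0) ≤ Submodule.comap χ (RingHom.ker ε) := by
  cases n with
  | zero =>
    obtain ⟨h, hf₀, -⟩ := hf
    rw [hf₀]
    exact (LinearMap.range_comp_le_range _ _).trans hd₀
  | succ k =>
    obtain ⟨h, h', hf₀, -⟩ := hf
    rintro _ ⟨x, rfl⟩
    rw [hf₀, LinearMap.sub_apply, LinearMap.smul_apply]
    refine sub_mem (hd₀ ⟨_, rfl⟩) (zsmul_mem ?_ _)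
    exact span_ker_smul_le_comap_ker ε (χ ∘ₗ h') (hmin k ⟨x, rfl⟩)

end Augmentation

theorem stmt_18_general (K : Type) [Field K] (A : Type) [Ring A] [Algebra K A]
    (ε : A →ₐ[K] K)
    (Q : ℕ → Type) [∀ j, AddCommGroup (Q j)] [∀ j, Module A (Q j)]
    [∀ j, Module K (Q j)] [∀ j, SMulCommClass A K (Q j)]
    (hproj : ∀ j, Module.Projective A (Q j))
    (d : ∀ j, Q (j+1) →ₗ[A] Q j)
    (e : Q 0 ≃ₗ[A] A)
    (hexact : ∀ j, LinearMap.range (d (j+1)) = LinearMap.ker (d j))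
    (hd1 : Submodule.map (e : Q 0 →ₗ[A] A) (LinearMap.range (d 0)) =
      RingHom.ker (ε : A →+* K))
    -- minimality : `im(d_j) ⊆ A₊ Q_{j-1}`
    (hmin : ∀ j, LinearMap.range (d j) ≤
      Submodule.span A {y : Q j | ∃ a ∈ RingHom.ker (ε : A →+* K), ∃ x : Q j, y = a • x})
    (n : ℕ)
    (H : Submodule K (∀ m, Q (n + m) →ₗ[A] Q m))
    -- `H` is contained in `Z^n`
    (hHZ : ∀ f ∈ H, IsCocycle A Q d n f)
    -- `p : f ↦ ε ∘ f_n` is injective on `H` ...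
    (hinj : ∀ f ∈ H, ∀ g ∈ H,
      (∀ x : Q (n + 0), ε (e (f 0 x)) = ε (e (g 0 x))) → f = g)
    -- ... and maps `H` onto `Hom_A(Q_n, K)` (`K` the trivial module, `A` acting via `ε`)
    (hsurj : ∀ φ : Q (n + 0) → K,
      ((∀ x y, φ (x + y) = φ x + φ y) ∧ (∀ (a : A) (x), φ (a • x) = ε a * φ x)) →
      ∃ f ∈ H, ∀ x, ε (e (f 0 x)) = φ x) :
    -- `Z^n = B^n + H` (with `B^n + H ⊆ Z^n`) ...
    (∀ f, IsCocycle A Q d n f ↔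
      ∃ b h, IsCoboundary A Q d n b ∧ h ∈ H ∧ f = b + h) ∧
    -- ... and the sum is direct
    (∀ b b' h h', IsCoboundary A Q d n b → IsCoboundary A Q d n b' → h ∈ H → h' ∈ H →
      b + h = b' + h' → b = b' ∧ h = h') := by
  have hdd : ∀ j, d j ∘ₗ d (j+1) = 0 := fun j => LinearMap.range_le_ker_iff.mp (hexact j).le
  have hd₀ : LinearMap.range (d 0) =
      Submodule.comap (e : Q 0 →ₗ[A] A) (RingHom.ker (ε : A →+* K)) := by
    rw [← hd1, Submodule.comap_map_eq_of_injective e.injective]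
  have hB : ∀ b, IsCoboundary A Q d n b → ∀ x, ε (e (b 0 x)) = 0 := fun b hb x =>
    hb.range_le_comap_ker _ _ hd₀.le hmin ⟨x, rfl⟩
  refine ⟨fun f => ⟨fun hf => ?_, ?_⟩, fun b b' h h' hb hb' hh hh' hbh => ?_⟩
  · obtain ⟨g, hg, hgf⟩ := hsurj (fun x => ε (e (f 0 x))) ⟨by simp, by simp⟩
    refine ⟨f - g, g, isCoboundary_of_range_le hexact (hf.sub (hHZ g hg)) ?_, hg, by abel⟩
    rintro _ ⟨x, rfl⟩
    rw [hd₀]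
    simp [hgf]
  · rintro ⟨b, h, hb, hh, rfl⟩
    exact (hb.isCocycle hdd).add (hHZ h hh)
  · obtain rfl : h = h' := hinj h hh h' hh' fun x => by
      simpa [hB b hb x, hB b' hb' x] using congrArg (fun f => ε (e (f 0 x))) hbh
    exact ⟨add_right_cancel hbh, rfl⟩

/-- Proposition 4.3, `Z^n = B^n ⊕ H`.  Let `(Q_•, d_•)` be a minimal
resolution of the trivial module `K = A/A₊` by projective left `A`-modules with `Q₀ = A`
(identified via `e`).  Let `H` be a `K`-subspace of the cocycles `Z^n ⊆ U^n` such that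
`p : f ↦ ε ∘ f_n` restricts to a bijection from `H` onto `Hom_A(Q_n, K)`.  Then every
cocycle decomposes uniquely as a coboundary plus an element of `H`. -/
theorem stmt_18 (K : Type) [Field K] (A : Type) [Ring A] [Algebra K A]
    (ε : A →ₐ[K] K)
    (Q : ℕ → Type) [∀ j, AddCommGroup (Q j)] [∀ j, Module A (Q j)]
    [∀ j, Module K (Q j)] [∀ j, IsScalarTower K A (Q j)] [∀ j, SMulCommClass A K (Q j)]
    (hproj : ∀ j, Module.Projective A (Q j))
    (d : ∀ j, Q (j+1) →ₗ[A] Q j)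
    (e : Q 0 ≃ₗ[A] A)
    (hexact : ∀ j, LinearMap.range (d (j+1)) = LinearMap.ker (d j))
    (hd1 : Submodule.map (e : Q 0 →ₗ[A] A) (LinearMap.range (d 0)) =
      RingHom.ker (ε : A →+* K))
    -- minimality : `im(d_j) ⊆ A₊ Q_{j-1}`
    (hmin : ∀ j, LinearMap.range (d j) ≤
      Submodule.span A {y : Q j | ∃ a ∈ RingHom.ker (ε : A →+* K), ∃ x : Q j, y = a • x})
    (n : ℕ)
    (H : Submodule K (∀ m, Q (n + m) →ₗ[A] Q m))
    -- `H` is contained in `Z^n`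
    (hHZ : ∀ f ∈ H, IsCocycle A Q d n f)
    -- `p : f ↦ ε ∘ f_n` is injective on `H` ...
    (hinj : ∀ f ∈ H, ∀ g ∈ H,
      (∀ x : Q (n + 0), ε (e (f 0 x)) = ε (e (g 0 x))) → f = g)
    -- ... and maps `H` onto `Hom_A(Q_n, K)` (`K` the trivial module, `A` acting via `ε`)
    (hsurj : ∀ φ : Q (n + 0) → K,
      ((∀ x y, φ (x + y) = φ x + φ y) ∧ (∀ (a : A) (x), φ (a • x) = ε a * φ x)) →
      ∃ f ∈ H, ∀ x, ε (e (f 0 x)) = φ x) :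
    -- `Z^n = B^n + H` (with `B^n + H ⊆ Z^n`) ...
    (∀ f, IsCocycle A Q d n f ↔
      ∃ b h, IsCoboundary A Q d n b ∧ h ∈ H ∧ f = b + h) ∧
    -- ... and the sum is direct
    (∀ b b' h h', IsCoboundary A Q d n b → IsCoboundary A Q d n b' → h ∈ H → h' ∈ H →
      b + h = b' + h' → b = b' ∧ h = h') :=
  stmt_18_general K A ε Q hproj d e hexact hd1 hmin n H hHZ hinj hsurj
end
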